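/- arXiv:1806.00584 — 2 statements merged into one kernel-verified Lean document; each statement's English description precedes it below -/
import Mathlib

section
/- Let T be a junction tree and let C_j and C be adjacent nodes of T with separator S = C_j ∩ C. Suppose a node C̃_j of T satisfies S ⊆ C̃_j ∩ C_j. Then the tree obtained from T by replacing the edge (C, C_j) with the edge (C, C̃_j) is still a tree and still satisfies the junction tree property. -/
/-!
Deleting the bridge `s(c, j)` splits the tree into two components with `t` on the side of `j`, so
adding `s(c, t)` joins them again into a tree. For the junction tree property it suffices that, for
each element `x`, any two nodes whose bags contain `x` are joined by a walk through such nodes,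
since in a tree the path between two nodes lies on every walk between them. A path of the old tree
crossing the edge `c — j` is rerouted along `c — t ⋯ j`, and every bag on the old path from `t` to
`j` contains `x`, because `x ∈ C c ∩ C j ⊆ C t ∩ C j`.
-/

namespace SimpleGraph

variable {V : Type*} {G H : SimpleGraph V}

def IsJunctionTree {β : Type*} (G : SimpleGraph V) (C : V → Set β) : Prop :=
  ∀ (A B : V) (p : G.Walk A B), p.IsPath → ∀ D ∈ p.support, C A ∩ C B ⊆ C D

lemma fromEdgeSet_diff_union_eq_deleteEdges_sup_edge (c j t : V) :
    fromEdgeSet ((G.edgeSet \ {s(c, j)}) ∪ {s(c, t)}) = G.deleteEdges {s(c, j)} ⊔ edge c t := by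
  ext a b
  simp only [fromEdgeSet_adj, Set.mem_union, Set.mem_sdiff, mem_edgeSet, Set.mem_singleton_iff,
    sup_adj, deleteEdges_adj, edge_adj, Sym2.eq_iff]
  constructor
  · rintro ⟨h | h, hab⟩
    · exact Or.inl h
    · exact Or.inr ⟨h, hab⟩
  · rintro (h | ⟨h, hab⟩)
    · exact ⟨Or.inl h, h.1.ne⟩
    · exact ⟨Or.inr h, hab⟩

lemma adj_sup_edge {u v : V} (huv : u ≠ v) : (G ⊔ edge u v).Adj u v :=
  .inr ((edge_adj ..).mpr ⟨.inl ⟨rfl, rfl⟩, huv⟩)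

lemma IsAcyclic.support_subset_of_isPath (hG : G.IsAcyclic) {a b : V} {p : G.Walk a b}
    (hp : p.IsPath) (w : G.Walk a b) : p.support ⊆ w.support := by
  classical
  have : p = w.bypass := congrArg Subtype.val <|
    (hG.subsingleton_path a b).elim ⟨p, hp⟩ ⟨w.bypass, w.bypass_isPath⟩
  exact this ▸ w.support_bypass_subset_support

lemma IsAcyclic.isJunctionTree_of_exists_walk {β : Type*} {C : V → Set β} (hG : G.IsAcyclic)
    (h : ∀ x a b, x ∈ C a → x ∈ C b → ∃ w : G.Walk a b, ∀ v ∈ w.support, x ∈ C v) :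
    G.IsJunctionTree C := by
  rintro A B p hp D hD x ⟨hA, hB⟩
  obtain ⟨w, hw⟩ := h x A B hA hB
  exact hw D (hG.support_subset_of_isPath hp w hD)

lemma Walk.exists_walk_of_deleteEdges_le {c j : V} (hle : G.deleteEdges {s(c, j)} ≤ H)
    (r : H.Walk c j) {P : V → Prop} (hr : P c → P j → ∀ v ∈ r.support, P v) {a b : V}
    (w : G.Walk a b) (hw : ∀ v ∈ w.support, P v) :
    ∃ w' : H.Walk a b, ∀ v ∈ w'.support, P v := by
  induction w with
  | nil => exact ⟨.nil, hw⟩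
  | @cons u v b huv p ih =>
    have hu : P u := hw u p.support.mem_cons_self
    have hv : P v := hw v (List.mem_cons_of_mem _ p.start_mem_support)
    obtain ⟨p', hp'⟩ := ih fun x hx => hw x (List.mem_cons_of_mem _ hx)
    obtain ⟨e, he⟩ : ∃ e : H.Walk u v, ∀ x ∈ e.support, P x := by
      by_cases hcj : s(u, v) = s(c, j)
      · rcases Sym2.eq_iff.mp hcj with ⟨rfl, rfl⟩ | ⟨rfl, rfl⟩
        · exact ⟨r, hr hu hv⟩
        · exact ⟨r.reverse, by simpa using hr hv hu⟩
      · refine ⟨.cons (hle (deleteEdges_adj.mpr ⟨huv, hcj⟩)) .nil, ?_⟩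
        simp [hu, hv]
    refine ⟨e.append p', fun x hx => ?_⟩
    rcases (Walk.mem_support_append_iff e p').mp hx with hx | hx
    exacts [he x hx, hp' x hx]

section MoveNeighbor

variable {c j t : V}

lemma IsTree.deleteEdges_sup_edge (hG : G.IsTree) (hadj : G.Adj c j) (htc : t ≠ c)
    (hreach : (G.deleteEdges {s(c, j)}).Reachable j t) :
    (G.deleteEdges {s(c, j)} ⊔ edge c t).IsTree := by
  have hct := adj_sup_edge (G := G.deleteEdges {s(c, j)}) htc.symm
  obtain ⟨q⟩ := hreach.symm
  have : Nonempty V := hG.connected.nonempty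
  refine ⟨.mk fun u v => ?_, .sup_edge_of_not_reachable (fun hct' => ?_) ?_⟩
  · obtain ⟨w⟩ := hG.connected.preconnected u v
    obtain ⟨w', -⟩ := Walk.exists_walk_of_deleteEdges_le le_sup_left
      (.cons hct (q.mapLe le_sup_left)) (P := fun _ => True) (fun _ _ _ _ => trivial) w
      (fun _ _ => trivial)
    exact ⟨w'⟩
  · -- `s(c, j)` is a bridge of the tree `G`, but `t` joins `c` to `j` without it
    exact isBridge_iff.mp (isAcyclic_iff_forall_adj_isBridge.mp hG.isAcyclic hadj)
      (hct'.trans hreach.symm)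
  · exact hG.isAcyclic.anti (deleteEdges_le _)

lemma IsJunctionTree.deleteEdges_sup_edge {β : Type*} {C : V → Set β} (hJT : G.IsJunctionTree C)
    (hG : G.IsTree) (hadj : G.Adj c j) (htc : t ≠ c) (hsep : C c ∩ C j ⊆ C t ∩ C j)
    (hreach : (G.deleteEdges {s(c, j)}).Reachable j t) :
    (G.deleteEdges {s(c, j)} ⊔ edge c t).IsJunctionTree C := by
  classical
  have hct := adj_sup_edge (G := G.deleteEdges {s(c, j)}) htc.symm
  obtain ⟨q⟩ := hreach.symm
  refine (hG.deleteEdges_sup_edge hadj htc hreach).isAcyclic.isJunctionTree_of_exists_walk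
    fun x a b ha hb => ?_
  obtain ⟨p, hp, -⟩ := hG.existsUnique_path a b
  refine Walk.exists_walk_of_deleteEdges_le le_sup_left (.cons hct (q.bypass.mapLe le_sup_left))
    (P := (x ∈ C ·)) (fun hc hj v hv => ?_) p fun v hv => hJT a b p hp v hv ⟨ha, hb⟩
  rw [Walk.support_cons, Walk.support_mapLe_eq_support, List.mem_cons] at hv
  rcases hv with rfl | hv
  · exact hc
  · exact hJT t j _ (q.bypass_isPath.mapLe (deleteEdges_le _)) v
      (by rwa [Walk.support_mapLe_eq_support]) (hsep ⟨hc, hj⟩)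

end MoveNeighbor

end SimpleGraph

theorem stmt4_general {ι β : Type*} (G : SimpleGraph ι) (hG : G.IsTree)
    (C : ι → Set β)
    (hJT : ∀ (A B : ι) (p : G.Walk A B), p.IsPath → ∀ D ∈ p.support, C A ∩ C B ⊆ C D)
    (c j t : ι) (hadj : G.Adj c j) (htc : t ≠ c)
    (hsep : C c ∩ C j ⊆ C t ∩ C j)
    (hreach : (G.deleteEdges {s(c, j)}).Reachable j t) :
    (SimpleGraph.fromEdgeSet ((G.edgeSet \ {s(c, j)}) ∪ {s(c, t)})).IsTree ∧
      ∀ (A B : ι) (p : (SimpleGraph.fromEdgeSet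
            ((G.edgeSet \ {s(c, j)}) ∪ {s(c, t)})).Walk A B),
        p.IsPath → ∀ D ∈ p.support, C A ∩ C B ⊆ C D := by
  rw [SimpleGraph.fromEdgeSet_diff_union_eq_deleteEdges_sup_edge]
  exact ⟨hG.deleteEdges_sup_edge hadj htc hreach,
    SimpleGraph.IsJunctionTree.deleteEdges_sup_edge hJT hG hadj htc hsep hreach⟩

/-- Moving a neighbor in a junction tree: if `(c, j)` is an edge with separator
`C c ∩ C j` contained in `C t ∩ C j`, and `t ≠ c` lies in the component of `j`
after deleting the edge, then replacing edge `(c, j)` by `(c, t)` again yields a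
tree satisfying the junction tree property. -/
theorem stmt4 {ι β : Type*} [Fintype ι] (G : SimpleGraph ι) (hG : G.IsTree)
    (C : ι → Set β)
    (hJT : ∀ (A B : ι) (p : G.Walk A B), p.IsPath → ∀ D ∈ p.support, C A ∩ C B ⊆ C D)
    (c j t : ι) (hadj : G.Adj c j) (htc : t ≠ c)
    (hsep : C c ∩ C j ⊆ C t ∩ C j)
    (hreach : (G.deleteEdges {s(c, j)}).Reachable j t) :
    (SimpleGraph.fromEdgeSet ((G.edgeSet \ {s(c, j)}) ∪ {s(c, t)})).IsTree ∧
      ∀ (A B : ι) (p : (SimpleGraph.fromEdgeSet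
            ((G.edgeSet \ {s(c, j)}) ∪ {s(c, t)})).Walk A B),
        p.IsPath → ∀ D ∈ p.support, C A ∩ C B ⊆ C D :=
  stmt4_general G hG C hJT c j t hadj htc hsep hreach
end

section
/- Let T be a junction tree, and let T' be a subtree of T with nodes C₁, …, C_k (k ≥ 2). For each j, let S_j be the union of the separators C_j ∩ C over neighbors C of C_j in T'. For a new vertex v not in any node of T, define new nodes C̃_j = R_j ∪ {v} where S_j ⊆ R_j ⊆ C_j. Then for any path (C̃_{r_1}, …, C̃_{r_m}) along the replicated subtree structure, ⋂_{i=1}^m C̃_{r_i} = (⋂_{i=1}^m C_{r_i}) ∪ {v}. -/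
/-!
On a path with at least one edge every node `C i` has a neighbour `C j` on the path, and
`j ∈ V'`, so `R i` still contains the separator `C i ∩ C j`. Any point lying in all the `C`'s
of the path lies in that separator, hence shrinking each `C i` to `R i` does not change the
intersection; adjoining `v` commutes with the intersection.
-/

theorem SimpleGraph.Walk.exists_mem_support_adj_of_not_nil {V : Type*} {G : SimpleGraph V}
    {u v w : V} {p : G.Walk u v} (hp : ¬p.Nil) (hw : w ∈ p.support) :
    ∃ y ∈ p.support, G.Adj w y := by
  obtain ⟨e, he, hwe⟩ := (p.mem_support_iff_exists_mem_edges_of_not_nil hp).1 hw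
  obtain ⟨y, rfl⟩ := Sym2.mem_iff_exists.1 hwe
  exact ⟨y, p.snd_mem_support_of_mem_edges he, p.adj_of_mem_edges he⟩

theorem Set.biInter_eq_of_inter_subset {ι β : Type*} {s : Set ι} {R C : ι → Set β}
    (hRC : ∀ i ∈ s, R i ⊆ C i) (hsep : ∀ i ∈ s, ∃ j ∈ s, C i ∩ C j ⊆ R i) :
    ⋂ i ∈ s, R i = ⋂ i ∈ s, C i := by
  refine subset_antisymm (iInter₂_mono hRC) fun x hx ↦ mem_iInter₂.2 fun i hi ↦ ?_
  obtain ⟨j, hj, hCR⟩ := hsep i hi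
  exact hCR ⟨mem_iInter₂.1 hx i hi, mem_iInter₂.1 hx j hj⟩

theorem stmt8_general {ι β : Type*} (G : SimpleGraph ι)
    (C : ι → Set β)
    (V' : Set ι)
    (v : β)
    (R : ι → Set β)
    (hR : ∀ i ∈ V',
      (⋃ j ∈ {j | j ∈ V' ∧ G.Adj i j}, (C i ∩ C j)) ⊆ R i ∧ R i ⊆ C i)
    (a b : ι) (p : G.Walk a b) (hlen : 1 ≤ p.length)
    (hsupp : ∀ i ∈ p.support, i ∈ V') :
    (⋂ i ∈ p.support, (R i ∪ {v})) = (⋂ i ∈ p.support, C i) ∪ {v} := by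
  have hp : ¬p.Nil := by
    rw [← SimpleGraph.Walk.length_eq_zero_iff]
    omega
  have hsep : ∀ i ∈ p.support, ∃ j ∈ p.support, C i ∩ C j ⊆ R i := fun i hi ↦ by
    obtain ⟨j, hj, hadj⟩ := p.exists_mem_support_adj_of_not_nil hp hi
    have hj' : j ∈ {j | j ∈ V' ∧ G.Adj i j} := ⟨hsupp j hj, hadj⟩
    exact ⟨j, hj, (Set.subset_biUnion_of_mem (u := fun j ↦ C i ∩ C j) hj').trans
      (hR i (hsupp i hi)).1⟩
  rw [← Set.iInter₂_union]
  exact congrArg (· ∪ {v}) (Set.biInter_eq_of_inter_subset (s := {i | i ∈ p.support})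
    (fun i hi ↦ (hR i (hsupp i hi)).2) hsep)

/-- Let `T` be a junction tree, `V'` the node set of a connected subtree `T'` with
at least two nodes, and for each node `i ∈ V'` let `S i` be the union of the
separators of `i` with its neighbors in `T'`. For a new vertex `v` belonging to no
node, form new nodes `R i ∪ {v}` with `S i ⊆ R i ⊆ C i`. Then along any path of
the subtree, the intersection of the new nodes equals the intersection of the old
nodes with `v` adjoined. -/
theorem stmt8 {ι β : Type*} [Fintype ι] (G : SimpleGraph ι) (hG : G.IsTree)
    (C : ι → Set β)
    (hJT : ∀ (A B : ι) (p : G.Walk A B), p.IsPath → ∀ D ∈ p.support, C A ∩ C B ⊆ C D)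
    (V' : Set ι) (hconn : (G.induce V').Connected) (hcard : 2 ≤ Nat.card V')
    (v : β) (hv : ∀ i, v ∉ C i)
    (R : ι → Set β)
    (hR : ∀ i ∈ V',
      (⋃ j ∈ {j | j ∈ V' ∧ G.Adj i j}, (C i ∩ C j)) ⊆ R i ∧ R i ⊆ C i)
    (a b : ι) (p : G.Walk a b) (hp : p.IsPath) (hlen : 1 ≤ p.length)
    (hsupp : ∀ i ∈ p.support, i ∈ V') :
    (⋂ i ∈ p.support, (R i ∪ {v})) = (⋂ i ∈ p.support, C i) ∪ {v} :=
  stmt8_general G C V' v R hR a b p hlen hsupp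
end
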